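/- If Z ~ Gamma(α, β) with shape α > 0 and scale β > 0 and m a natural number, then E[Z^m (log Z)²] = β^m · α(α+1)⋯(α+m−1) · (ψ₁(α+m) + (ψ(α+m) + log β)²). -/

import Mathlib

/-! Substituting `z = β t` turns the moment into `β ^ m / Γ(α)` times
`∫₀^∞ t^(s-1) (log β + log t)² e^(-t) dt` with `s = α + m`. Differentiating Euler's integral
under the integral sign (a Mellin transform) identifies `∫₀^∞ t^(s-1) (log t)^k e^(-t) dt`
with `Γ⁽ᵏ⁾(s)`, so this integral is `Γ'' + 2 log β Γ' + (log β)² Γ` at `s`, which is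
`Γ(s) (ψ₁(s) + (ψ(s) + log β)²)` because `ψ = Γ'/Γ` and `ψ₁ = Γ''/Γ - ψ²`. Finally
`Γ(α + m) / Γ(α) = α (α + 1) ⋯ (α + m - 1)`. -/

open MeasureTheory

noncomputable def gammaPDF (α β z : ℝ) : ℝ :=
  z ^ (α - 1) * Real.exp (-z / β) / (Real.Gamma α * β ^ α)

noncomputable def digamma (x : ℝ) : ℝ := deriv (fun y : ℝ => Real.log (Real.Gamma y)) x

noncomputable def trigamma (x : ℝ) : ℝ := deriv digamma x

open Real Set Filter Asymptotics
open scoped Topology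

theorem mellin_ofReal (f : ℝ → ℝ) (x : ℝ) :
    mellin (fun t => (f t : ℂ)) x = ((∫ t in Ioi 0, t ^ (x - 1) * f t : ℝ) : ℂ) := by
  rw [mellin, ← integral_complex_ofReal]
  refine setIntegral_congr_fun measurableSet_Ioi fun t ht => ?_
  rw [smul_eq_mul, ← Complex.ofReal_one, ← Complex.ofReal_sub,
    ← Complex.ofReal_cpow (le_of_lt ht), Complex.ofReal_mul]

theorem hasDerivAt_integral_rpow_mul_of_isBigO {a b x : ℝ} {f : ℝ → ℝ}
    (hfc : LocallyIntegrableOn f (Ioi 0)) (hf_top : f =O[atTop] (· ^ (-a))) (hx_top : x < a)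
    (hf_bot : f =O[𝓝[>] 0] (· ^ (-b))) (hx_bot : b < x) :
    HasDerivAt (fun s => ∫ t in Ioi 0, t ^ (s - 1) * f t)
      (∫ t in Ioi 0, t ^ (x - 1) * (log t * f t)) x := by
  have hF := (mellin_hasDerivAt_of_isBigO_rpow (f := fun t => (f t : ℂ)) (s := x)
    (fun t ht => let ⟨u, hu, hfu⟩ := hfc t ht; ⟨u, hu, hfu.ofReal⟩)
    (by simpa using hf_top) (by simpa using hx_top) (by simpa using hf_bot)
    (by simpa using hx_bot)).2.real_of_complex
  have hlog : (fun t : ℝ => log t • (f t : ℂ)) = fun t => ((log t * f t : ℝ) : ℂ) := by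
    ext t; simp
  simpa only [hlog, mellin_ofReal, Complex.ofReal_re] using hF

theorem isBigO_log_pow_mul_exp_neg_atTop (k : ℕ) (a : ℝ) :
    (fun t => log t ^ k * exp (-t)) =O[atTop] (· ^ (-a)) := by
  induction k generalizing a with
  | zero =>
    simpa only [pow_zero, one_mul, neg_one_mul] using
      (isLittleO_exp_neg_mul_rpow_atTop zero_lt_one (-a)).isBigO
  | succ k ih =>
    simpa only [smul_eq_mul, pow_succ', mul_assoc] using
      isBigO_rpow_top_log_smul (lt_add_one a) (ih (a + 1))

theorem isBigO_log_pow_mul_exp_neg_nhdsGT_zero (k : ℕ) {b : ℝ} (hb : 0 < b) :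
    (fun t => log t ^ k * exp (-t)) =O[𝓝[>] 0] (· ^ (-b)) := by
  induction k generalizing b with
  | zero =>
    refine IsBigO.of_bound 1 ?_
    filter_upwards [Ioo_mem_nhdsGT one_pos] with t ht
    rw [pow_zero, one_mul, one_mul, norm_of_nonneg (exp_pos _).le,
      norm_of_nonneg (rpow_nonneg ht.1.le _)]
    exact (exp_le_one_iff.2 (neg_nonpos.2 ht.1.le)).trans
      (one_le_rpow_of_pos_of_le_one_of_nonpos ht.1 ht.2.le (neg_nonpos.2 hb.le))
  | succ k ih =>
    simpa only [smul_eq_mul, pow_succ', mul_assoc] using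
      isBigO_rpow_zero_log_smul (half_lt_self hb) (ih (half_pos hb))

theorem continuousOn_log_pow_mul_exp_neg (k : ℕ) :
    ContinuousOn (fun t => log t ^ k * exp (-t)) (Ioi 0) :=
  ((continuousOn_log.mono fun _ ht => ne_of_gt ht).pow k).mul (by fun_prop)

/-- `Γ⁽ᵏ⁾(s)` for `s > 0`: the Euler integral differentiated `k` times under the integral sign. -/
noncomputable def gammaLogPowIntegral (k : ℕ) (s : ℝ) : ℝ :=
  ∫ t in Ioi 0, t ^ (s - 1) * (log t ^ k * exp (-t))

theorem integrableOn_rpow_mul_log_pow_mul_exp_neg (k : ℕ) {s : ℝ} (hs : 0 < s) :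
    IntegrableOn (fun t => t ^ (s - 1) * (log t ^ k * exp (-t))) (Ioi 0) :=
  mellin_convergent_of_isBigO_scalar
    ((continuousOn_log_pow_mul_exp_neg k).locallyIntegrableOn measurableSet_Ioi)
    (isBigO_log_pow_mul_exp_neg_atTop k (s + 1)) (lt_add_one s)
    (isBigO_log_pow_mul_exp_neg_nhdsGT_zero k (half_pos hs)) (half_lt_self hs)

theorem hasDerivAt_gammaLogPowIntegral (k : ℕ) {s : ℝ} (hs : 0 < s) :
    HasDerivAt (gammaLogPowIntegral k) (gammaLogPowIntegral (k + 1) s) s := by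
  unfold gammaLogPowIntegral
  simpa only [pow_succ', mul_assoc] using
    hasDerivAt_integral_rpow_mul_of_isBigO
      ((continuousOn_log_pow_mul_exp_neg k).locallyIntegrableOn measurableSet_Ioi)
      (isBigO_log_pow_mul_exp_neg_atTop k (s + 1)) (lt_add_one s)
      (isBigO_log_pow_mul_exp_neg_nhdsGT_zero k (half_pos hs)) (half_lt_self hs)

theorem gammaLogPowIntegral_zero {s : ℝ} (hs : 0 < s) : gammaLogPowIntegral 0 s = Gamma s := by
  simp only [gammaLogPowIntegral, pow_zero, one_mul, Gamma_eq_integral hs, mul_comm]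

theorem hasDerivAt_Gamma_gammaLogPowIntegral {s : ℝ} (hs : 0 < s) :
    HasDerivAt Gamma (gammaLogPowIntegral 1 s) s :=
  (hasDerivAt_gammaLogPowIntegral 0 hs).congr_of_eventuallyEq <|
    (eventually_gt_nhds hs).mono fun _ hy => (gammaLogPowIntegral_zero hy).symm

theorem digamma_eq_div {s : ℝ} (hs : 0 < s) : digamma s = gammaLogPowIntegral 1 s / Gamma s :=
  ((hasDerivAt_Gamma_gammaLogPowIntegral hs).log (Gamma_pos_of_pos hs).ne').deriv

theorem trigamma_eq {s : ℝ} (hs : 0 < s) :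
    trigamma s = gammaLogPowIntegral 2 s / Gamma s - digamma s ^ 2 := by
  have hΓ := (Gamma_pos_of_pos hs).ne'
  have hdigamma : digamma =ᶠ[𝓝 s] gammaLogPowIntegral 1 / Gamma :=
    (eventually_gt_nhds hs).mono fun _ hy => digamma_eq_div hy
  rw [trigamma, hdigamma.deriv_eq, ((hasDerivAt_gammaLogPowIntegral 1 hs).div
    (hasDerivAt_Gamma_gammaLogPowIntegral hs) hΓ).deriv, digamma_eq_div hs]
  field_simp

theorem integral_rpow_mul_add_log_sq_mul_exp_neg {s : ℝ} (hs : 0 < s) (c : ℝ) :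
    ∫ t in Ioi 0, t ^ (s - 1) * ((c + log t) ^ 2 * exp (-t)) =
      Gamma s * (trigamma s + (digamma s + c) ^ 2) := by
  have hexpand : ∀ t : ℝ, t ^ (s - 1) * ((c + log t) ^ 2 * exp (-t)) =
      c ^ 2 * (t ^ (s - 1) * (log t ^ 0 * exp (-t))) +
        2 * c * (t ^ (s - 1) * (log t ^ 1 * exp (-t))) +
        t ^ (s - 1) * (log t ^ 2 * exp (-t)) := fun t => by ring
  have hint (k : ℕ) := integrableOn_rpow_mul_log_pow_mul_exp_neg k hs
  simp only [hexpand]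
  rw [integral_add (by exact ((hint 0).const_mul _).add ((hint 1).const_mul _)) (hint 2),
    integral_add ((hint 0).const_mul _) ((hint 1).const_mul _), integral_const_mul,
    integral_const_mul]
  change c ^ 2 * gammaLogPowIntegral 0 s + 2 * c * gammaLogPowIntegral 1 s +
    gammaLogPowIntegral 2 s = _
  rw [gammaLogPowIntegral_zero hs, trigamma_eq hs, digamma_eq_div hs]
  field_simp [(Gamma_pos_of_pos hs).ne']
  ring

theorem gammaPDF_mul_left {α β t : ℝ} (hβ : 0 < β) (ht : 0 ≤ t) :
    gammaPDF α β (β * t) = t ^ (α - 1) * exp (-t) / (Gamma α * β) := by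
  rw [gammaPDF, mul_rpow hβ.le ht, rpow_sub_one hβ.ne', neg_div, mul_div_cancel_left₀ _ hβ.ne']
  field_simp

theorem integral_pow_mul_mul_gammaPDF {α β : ℝ} (hβ : 0 < β) (m : ℕ) (h : ℝ → ℝ) :
    ∫ z in Ioi 0, z ^ m * h z * gammaPDF α β z =
      β ^ m / Gamma α * ∫ t in Ioi 0, t ^ (α + m - 1) * (h (β * t) * exp (-t)) := by
  have hsub := integral_comp_mul_left_Ioi (fun z => z ^ m * h z * gammaPDF α β z) 0 hβ
  rw [mul_zero, smul_eq_mul, eq_inv_mul_iff_mul_eq₀ hβ.ne'] at hsub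
  rw [← hsub, ← integral_const_mul, ← integral_const_mul]
  refine setIntegral_congr_fun measurableSet_Ioi fun t (ht : 0 < t) => ?_
  rw [gammaPDF_mul_left hβ ht.le, add_sub_right_comm, rpow_add ht, rpow_natCast]
  field_simp
  ring

theorem prod_range_add_eq_Gamma_div {α : ℝ} (hα : 0 < α) (m : ℕ) :
    ∏ j ∈ Finset.range m, (α + j) = Gamma (α + m) / Gamma α := by
  induction m with
  | zero => simp [(Gamma_pos_of_pos hα).ne']
  | succ m ih =>
    rw [Finset.prod_range_succ, ih, Nat.cast_succ, ← add_assoc,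
      Gamma_add_one (by positivity)]
    ring

theorem gamma_pow_mul_sq_log_moment (α β : ℝ) (hα : 0 < α) (hβ : 0 < β) (m : ℕ) :
    ∫ z in Set.Ioi (0 : ℝ), z ^ m * Real.log z ^ 2 * gammaPDF α β z =
      β ^ m * (∏ j ∈ Finset.range m, (α + j)) *
        (trigamma (α + m) + (digamma (α + m) + Real.log β) ^ 2) := by
  have hs : 0 < α + m := by positivity
  have hlog_mul : ∀ t ∈ Ioi (0 : ℝ), t ^ (α + m - 1) * (log (β * t) ^ 2 * exp (-t)) =
      t ^ (α + m - 1) * ((log β + log t) ^ 2 * exp (-t)) := fun t ht => by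
    rw [log_mul hβ.ne' (ne_of_gt ht)]
  rw [integral_pow_mul_mul_gammaPDF hβ m, setIntegral_congr_fun measurableSet_Ioi hlog_mul,
    integral_rpow_mul_add_log_sq_mul_exp_neg hs, prod_range_add_eq_Gamma_div hα]
  field_simp [(Gamma_pos_of_pos hα).ne']
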